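/- Determination of the observed Markov blanket by observed separation relations: let G=(V,E) be a directed graph, possibly cyclic, whose node set is partitioned as V = O ∪ L into observed and latent nodes, and let X ∈ O. Then for any σ-acyclification G^acy of G, the collection of sets S ⊆ O\{X} such that X is σ-separated from O\(S∪{X}) given S in G coincides with the collection of sets S ⊆ O\{X} such that X is d-separated from O\(S∪{X}) given S in G^acy; consequently, any procedure that identifies the minimal such set from these separation relations returns MB_σ^G(X) when applied to G, even when G contains directed cycles. -/

import Mathlib

/-- A directed graph (loopless, possibly cyclic). -/
structure DiGraph (V : Type) where
  Edge : V → V → Prop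
  loopless : ∀ v, ¬ Edge v v

namespace DiGraph

variable {V : Type}

/-- Reachability by a directed path (possibly of length zero). -/
def reach (G : DiGraph V) : V → V → Prop := Relation.ReflTransGen G.Edge

/-- Ancestors of a set: nodes admitting a directed path (possibly of length zero)
to some node of the set. -/
def anc (G : DiGraph V) (S : Set V) : Set V := {Z | ∃ s ∈ S, G.reach Z s}

/-- The strongly connected component of a node. -/
def scc (G : DiGraph V) (X : V) : Set V := {Z | G.reach X Z ∧ G.reach Z X}

/-- Descendants: nodes `Z ≠ X` with a directed path from `X` to `Z`. -/
def de (G : DiGraph V) (X : V) : Set V := {Z | Z ≠ X ∧ Relation.TransGen G.Edge X Z}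

/-- Children of a node. -/
def ch (G : DiGraph V) (X : V) : Set V := {Z | G.Edge X Z}

/-- A directed graph is acyclic (a DAG) if it has no directed cycles. -/
def Acyclic (G : DiGraph V) : Prop := ∀ v, ¬ Relation.TransGen G.Edge v v

end DiGraph

/-- A path between `X` and `Y` in `G`: a sequence of `k+2` distinct nodes,
where consecutive nodes are joined by an edge of `G` in one of the two
orientations (recorded by `dir`: `dir i = true` means the edge
`node i → node (i+1)` is used, `dir i = false` means `node (i+1) → node i`). -/
structure GPath {V : Type} (G : DiGraph V) (X Y : V) where
  k : ℕ
  node : Fin (k + 2) → V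
  dir : Fin (k + 1) → Bool
  inj : Function.Injective node
  first : node 0 = X
  last : node (Fin.last (k + 1)) = Y
  adj : ∀ i : Fin (k + 1),
    (dir i = true → G.Edge (node i.castSucc) (node i.succ)) ∧
    (dir i = false → G.Edge (node i.succ) (node i.castSucc))

namespace GPath

variable {V : Type} {G : DiGraph V} {X Y : V}

/-- The `j`-th interior (non-endpoint) node of the path (position `j+1`). -/
def inner (p : GPath G X Y) (j : Fin p.k) : V := p.node j.succ.castSucc

/-- The interior node at position `j+1` is a collider: both incident edges
of the path point into it. -/
def isCollider (p : GPath G X Y) (j : Fin p.k) : Prop :=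
  p.dir j.castSucc = true ∧ p.dir j.succ = false

/-- The path is σ-blocked by `S`. -/
def sigmaBlocked (p : GPath G X Y) (S : Set V) : Prop :=
  ∃ j : Fin p.k,
    (p.isCollider j ∧ p.inner j ∉ G.anc S) ∨
    (¬ p.isCollider j ∧ p.inner j ∈ S ∧
      ((p.dir j.succ = true ∧ p.node j.succ.succ ∉ G.scc (p.inner j)) ∨
       (p.dir j.castSucc = false ∧ p.node j.castSucc.castSucc ∉ G.scc (p.inner j))))

/-- The path is d-blocked by `S`. -/
def dBlocked (p : GPath G X Y) (S : Set V) : Prop :=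
  ∃ j : Fin p.k,
    (p.isCollider j ∧ p.inner j ∉ G.anc S) ∨
    (¬ p.isCollider j ∧ p.inner j ∈ S)

end GPath

namespace DiGraph

variable {V : Type}

/-- `X` and `Y` are σ-separated given `S`: every path between them is σ-blocked. -/
def sigmaSep (G : DiGraph V) (X Y : V) (S : Set V) : Prop :=
  ∀ p : GPath G X Y, p.sigmaBlocked S

/-- `X` and `Y` are d-separated given `S`: every path between them is d-blocked. -/
def dSep (G : DiGraph V) (X Y : V) (S : Set V) : Prop :=
  ∀ p : GPath G X Y, p.dBlocked S

end DiGraph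

/-- `Ga` is a σ-acyclification of `G`. -/
def IsAcyclification {V : Type} (G Ga : DiGraph V) : Prop :=
  Ga.Acyclic ∧
  (∀ X Y : V, X ≠ Y → X ∉ G.scc Y → (Ga.Edge X Y ↔ ∃ W ∈ G.scc Y, G.Edge X W)) ∧
  (∀ X Y : V, X ≠ Y → X ∈ G.scc Y → Xor' (Ga.Edge X Y) (Ga.Edge Y X))

namespace DiGraph

variable {V : Type}

/-- `S` is the observed Markov blanket of `X` (w.r.t. σ-separation) given the
observed node set `Obs`: the minimal set `S ⊆ Obs \ {X}` such that `X` is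
σ-separated from every node of `Obs \ (S ∪ {X})` given `S`. -/
def IsSigmaMB (G : DiGraph V) (Obs : Set V) (X : V) (S : Set V) : Prop :=
  S ⊆ Obs \ {X} ∧
  (∀ W ∈ Obs \ (S ∪ {X}), G.sigmaSep X W S) ∧
  (∀ T ⊆ Obs \ {X}, (∀ W ∈ Obs \ (T ∪ {X}), G.sigmaSep X W T) → S ⊆ T)

/-- `S` is the observed Markov blanket of `X` (w.r.t. d-separation). -/
def IsDMB (G : DiGraph V) (Obs : Set V) (X : V) (S : Set V) : Prop :=
  S ⊆ Obs \ {X} ∧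
  (∀ W ∈ Obs \ (S ∪ {X}), G.dSep X W S) ∧
  (∀ T ⊆ Obs \ {X}, (∀ W ∈ Obs \ (T ∪ {X}), G.dSep X W T) → S ⊆ T)

/-- `Z` is a backdoor adjustment set for `(X, Y)`: `Z` avoids `X`, `Y` and the
descendants of `X`, and σ-blocks every backdoor path from `X` to `Y`
(a path whose first edge has an arrowhead into `X`). -/
def IsBackdoorAdjustment (G : DiGraph V) (X Y : V) (Z : Set V) : Prop :=
  X ∉ Z ∧ Y ∉ Z ∧ Z ∩ G.de X = ∅ ∧
  ∀ p : GPath G X Y, p.dir 0 = false → p.sigmaBlocked Z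

end DiGraph

/-- Pre-treatment assumption: the outcome `Y` has no descendants and the
treatment `X` has no children except possibly `Y`. -/
def PreTreatment {V : Type} (G : DiGraph V) (X Y : V) : Prop :=
  G.de Y = ∅ ∧ G.ch X ⊆ {Y}

/-!
σ-separation in `G` and d-separation in `Ga` both mean that no walk between the two nodes is
open, because cutting a closed subwalk out of an open walk keeps it open. An edge `a → b` of `Ga`
is realised in `G` by an edge from `a` into the SCC of `b` followed by a directed walk inside that
SCC, which only adds non-colliders whose neighbours share their SCC. Conversely, an open walk of
`G` is replaced by a walk of `Ga` meeting each SCC it passes through in at most two nodes, joined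
by the edge of the tournament that `Ga` puts on the SCC. A collider of the new walk lies in an SCC
entered and left through arrowheads of the old walk, so the SCC contains a collider of the old
walk and hence an ancestor of `S` in `Ga`. Thus both families of separating sets coincide, and so
do their least elements.
-/

namespace DiGraph

variable {V : Type} {G Ga : DiGraph V} {S : Set V} {a b u u' v x y y' z X Y : V}

theorem mem_scc_self (G : DiGraph V) (x : V) : x ∈ G.scc x := ⟨.refl, .refl⟩

theorem mem_scc_comm : y ∈ G.scc x ↔ x ∈ G.scc y := And.comm

theorem scc_eq_of_mem (h : y ∈ G.scc x) : G.scc x = G.scc y := by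
  ext z
  exact ⟨fun hz => ⟨h.2.trans hz.1, hz.2.trans h.1⟩,
    fun hz => ⟨h.1.trans hz.1, hz.2.trans h.2⟩⟩

theorem mem_anc_of_mem (h : x ∈ S) : x ∈ G.anc S := ⟨x, h, .refl⟩

theorem mem_anc_of_reach (h : G.reach x y) (hy : y ∈ G.anc S) : x ∈ G.anc S :=
  let ⟨s, hs, hys⟩ := hy
  ⟨s, hs, h.trans hys⟩

theorem mem_anc_of_edge (h : G.Edge x y) (hy : y ∈ G.anc S) : x ∈ G.anc S :=
  mem_anc_of_reach (.single h) hy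

theorem ne_of_edge (h : G.Edge x y) : x ≠ y := by
  rintro rfl
  exact G.loopless x h

theorem Acyclic.eq_of_mem_scc (hG : G.Acyclic) (h : y ∈ G.scc x) : y = x := by
  by_contra hne
  obtain ⟨hxy, hyx⟩ := h
  rcases Relation.reflTransGen_iff_eq_or_transGen.mp hxy with h | h
  · exact hne h
  rcases Relation.reflTransGen_iff_eq_or_transGen.mp hyx with h' | h'
  · exact hne h'.symm
  · exact hG x (h.trans h')

theorem Acyclic.scc_eq (hG : G.Acyclic) (x : V) : G.scc x = {x} :=
  Set.eq_singleton_iff_unique_mem.mpr ⟨G.mem_scc_self x, fun _ => hG.eq_of_mem_scc⟩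

def Arc (G : DiGraph V) : Bool → V → V → Prop
  | true, x, y => G.Edge x y
  | false, x, y => G.Edge y x

theorem arc_iff {d : Bool} :
    G.Arc d a b ↔ (d = true → G.Edge a b) ∧ (d = false → G.Edge b a) := by
  cases d <;> simp [Arc]

theorem Arc.ne {d : Bool} (h : G.Arc d x y) : x ≠ y := by
  cases d
  exacts [(ne_of_edge h).symm, ne_of_edge h]

/-- The σ-openness of the node `x` on a walk `… u — x — y …`, where `d` and `d'` are the
directions of the two steps (`true` for `u → x`, resp. `x → y`). -/
def OpenAt (G : DiGraph V) (S : Set V) (d : Bool) (u x : V) (d' : Bool) (y : V) : Prop :=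
  if d = true ∧ d' = false then x ∈ G.anc S
  else x ∉ S ∨ ((d' = true → y ∈ G.scc x) ∧ (d = false → u ∈ G.scc x))

theorem openAt_of_collider (hx : x ∈ G.anc S) : G.OpenAt S true u x false y := by
  simpa [OpenAt] using hx

theorem openAt_of_notMem {d d' : Bool} (hx : x ∉ S) (h : d = false ∨ d' = true) :
    G.OpenAt S d u x d' y := by
  rw [OpenAt, if_neg (by cases d <;> cases d' <;> simp_all)]
  exact .inl hx

theorem mem_anc_of_openAt (h : G.OpenAt S true u x false y) : x ∈ G.anc S := by
  simpa [OpenAt] using h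

theorem notMem_of_openAt {d d' : Bool} (h : G.OpenAt S d u x d' y)
    (hnc : d = false ∨ d' = true)
    (hout : (d' = true ∧ y ∉ G.scc x) ∨ (d = false ∧ u ∉ G.scc x)) :
    x ∉ S := by
  rw [OpenAt, if_neg (by cases d <;> cases d' <;> simp_all)] at h
  rcases h with h | h
  · exact h
  · rcases hout with ⟨hd, hy⟩ | ⟨hd, hu⟩
    exacts [absurd (h.1 hd) hy, absurd (h.2 hd) hu]

theorem openAt_splice {d d₁ d₂ d' : Bool} (h₁ : G.OpenAt S d u x d₁ y')
    (h₂ : G.OpenAt S d₂ u' x d' y) (hanc : d = true → d' = false → x ∈ G.anc S) :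
    G.OpenAt S d u x d' y := by
  by_cases hcol : d = true ∧ d' = false
  · rw [OpenAt, if_pos hcol]
    exact hanc hcol.1 hcol.2
  rw [OpenAt, if_neg hcol]
  by_cases hx : x ∈ S
  · refine .inr ⟨fun hd' => ?_, fun hd => ?_⟩
    · rw [OpenAt, if_neg (by simp [hd'])] at h₂
      exact (h₂.resolve_left (not_not.mpr hx)).1 hd'
    · rw [OpenAt, if_neg (by simp [hd])] at h₁
      exact (h₁.resolve_left (not_not.mpr hx)).2 hd
  · exact .inl hx

def DOpenAt (G : DiGraph V) (S : Set V) (d : Bool) (x : V) (d' : Bool) : Prop :=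
  if d = true ∧ d' = false then x ∈ G.anc S else x ∉ S

theorem DOpenAt.openAt {d d' : Bool} (h : G.DOpenAt S d x d') : G.OpenAt S d u x d' y := by
  unfold DOpenAt at h
  unfold OpenAt
  split_ifs at h ⊢
  exacts [h, .inl h]

theorem Acyclic.dOpenAt_of_openAt (hG : G.Acyclic) {d d' : Bool} (h : G.OpenAt S d u x d' y)
    (hu : u ≠ x) (hy : y ≠ x) : G.DOpenAt S d x d' := by
  unfold OpenAt at h
  unfold DOpenAt
  split_ifs at h ⊢
  · exact h
  · rcases h with h | ⟨h₁, h₂⟩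
    · exact h
    simp only [hG.scc_eq, Set.mem_singleton_iff, hu, hy, imp_false] at h₁ h₂
    cases d <;> cases d' <;> simp_all

inductive Walk (G : DiGraph V) : V → V → Type
  | nil {x : V} : G.Walk x x
  | cons {x y z : V} (d : Bool) (h : G.Arc d x y) (w : G.Walk y z) : G.Walk x z

namespace Walk

def length : ∀ {x y : V}, G.Walk x y → ℕ
  | _, _, nil => 0
  | _, _, cons _ _ w => w.length + 1

def support : ∀ {x y : V}, G.Walk x y → List V
  | x, _, nil => [x]
  | x, _, cons _ _ w => x :: w.support

def append : ∀ {x y z : V}, G.Walk x y → G.Walk y z → G.Walk x z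
  | _, _, _, nil, w' => w'
  | _, _, _, cons d h w, w' => cons d h (w.append w')

/-- Direction and target of the first step. -/
def firstStep : ∀ {x y : V}, G.Walk x y → Option (Bool × V)
  | _, _, nil => none
  | _, _, cons (y := b) d _ _ => some (d, b)

/-- Direction and source of the last step, or `prev` for the empty walk. -/
def lastStep : ∀ {x y : V}, Option (Bool × V) → G.Walk x y → Option (Bool × V)
  | _, _, prev, nil => prev
  | x, _, _, cons d _ w => w.lastStep (some (d, x))

/-- σ-openness of a walk at all of its nodes but the last one; `prev` is the step by which the
walk is entered (`none` if its first node is an endpoint). -/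
def IsOpen (S : Set V) : ∀ {x y : V}, Option (Bool × V) → G.Walk x y → Prop
  | _, _, _, nil => True
  | x, _, prev, cons (y := b) d _ w =>
    (∀ q ∈ prev, G.OpenAt S q.1 q.2 x d b) ∧ w.IsOpen S (some (d, x))

@[simp] theorem nil_append (w : G.Walk x y) : nil.append w = w := rfl

@[simp] theorem cons_append {d : Bool} (h : G.Arc d x y) (w : G.Walk y z) (w' : G.Walk z v) :
    (cons d h w).append w' = cons d h (w.append w') := rfl

@[simp] theorem length_append (w : G.Walk x y) (w' : G.Walk y z) :
    (w.append w').length = w.length + w'.length := by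
  induction w with
  | nil => simp [length]
  | cons _ _ w ih => simp [length, ih]; omega

theorem exists_lastStep_some (w : G.Walk x y) (q : Bool × V) :
    ∃ q', w.lastStep (some q) = some q' := by
  induction w generalizing q with
  | nil => exact ⟨q, rfl⟩
  | cons _ _ w ih => exact ih _

@[simp] theorem isOpen_nil {prev : Option (Bool × V)} : (nil : G.Walk x x).IsOpen S prev := trivial

theorem isOpen_append {prev : Option (Bool × V)} (w : G.Walk x y) (w' : G.Walk y z) :
    (w.append w').IsOpen S prev ↔ w.IsOpen S prev ∧ w'.IsOpen S (w.lastStep prev) := by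
  induction w generalizing prev with
  | nil => simp [lastStep]
  | cons _ _ w ih => simp only [cons_append, IsOpen, ih, lastStep, and_assoc]

theorem isOpen_iff {prev : Option (Bool × V)} (w : G.Walk x y) :
    w.IsOpen S prev ↔
      (∀ q ∈ prev, ∀ r ∈ w.firstStep, G.OpenAt S q.1 q.2 x r.1 r.2) ∧
        w.IsOpen S none := by
  cases w with
  | nil => simp [firstStep]
  | cons d h w => simp [IsOpen, firstStep]

/-- Follow the walk forwards up to its first backward step, which is at a collider. -/
theorem mem_anc_of_isOpen (w : G.Walk x y) (hw : w.IsOpen S (some (true, u)))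
    (hlast : ∀ q ∈ w.lastStep (some (true, u)), q.1 = false) : x ∈ G.anc S := by
  induction w generalizing u with
  | nil => simp [lastStep] at hlast
  | cons d h w ih =>
    cases d with
    | false => exact mem_anc_of_openAt (hw.1 _ rfl)
    | true => exact mem_anc_of_edge h (ih hw.2 hlast)

theorem IsOpen.cut {prev : Option (Bool × V)} (w₁ : G.Walk x v) (w₂ : G.Walk v v)
    (w₃ : G.Walk v y) (hw₂ : 0 < w₂.length)
    (h : (w₁.append (w₂.append w₃)).IsOpen S prev) :
    (w₁.append w₃).IsOpen S prev := by
  rw [isOpen_append, isOpen_append] at h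
  obtain ⟨h₁, h₂, h₃⟩ := h
  refine (isOpen_append w₁ w₃).mpr
    ⟨h₁, (isOpen_iff w₃).mpr ⟨fun q hq r hr => ?_, ((isOpen_iff w₃).mp h₃).2⟩⟩
  cases w₂ with
  | nil => simp [length] at hw₂
  | cons f hf w₂ =>
    rw [Option.mem_def] at hq
    rw [hq] at h₂ h₃
    obtain ⟨p, hp⟩ := exists_lastStep_some (cons f hf w₂) q
    rw [hp] at h₃
    have hin := h₂.1 q rfl
    have hout := ((isOpen_iff w₃).mp h₃).1 p rfl r hr
    refine openAt_splice hin hout fun hq₁ hr₁ => ?_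
    cases hp₁ : p.1
    · cases f
      · exact mem_anc_of_openAt (hq₁ ▸ hin)
      · obtain ⟨q₁, q₂⟩ := q
        subst hq₁
        exact mem_anc_of_isOpen _ h₂ (by simp [hp, hp₁])
    · exact mem_anc_of_openAt (hp₁ ▸ hr₁ ▸ hout)

theorem exists_eq_append_of_mem_support (w : G.Walk x y) (hv : v ∈ w.support) :
    ∃ (w₁ : G.Walk x v) (w₂ : G.Walk v y), w = w₁.append w₂ := by
  induction w with
  | nil =>
    obtain rfl : v = _ := by simpa [support] using hv
    exact ⟨nil, nil, rfl⟩
  | cons d h w ih =>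
    rcases List.mem_cons.mp hv with rfl | hv
    · exact ⟨nil, cons d h w, rfl⟩
    · obtain ⟨w₁, w₂, rfl⟩ := ih hv
      exact ⟨cons d h w₁, w₂, rfl⟩

theorem exists_eq_append_loop_of_not_nodup (w : G.Walk x y) (hw : ¬ w.support.Nodup) :
    ∃ (v : V) (w₁ : G.Walk x v) (w₂ : G.Walk v v) (w₃ : G.Walk v y),
      0 < w₂.length ∧ w = w₁.append (w₂.append w₃) := by
  induction w with
  | nil => simp [support] at hw
  | @cons x _ _ d h w ih =>
    by_cases hx : x ∈ w.support
    · obtain ⟨w₂, w₃, rfl⟩ := exists_eq_append_of_mem_support w hx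
      exact ⟨x, nil, cons d h w₂, w₃, by simp [length], rfl⟩
    · obtain ⟨v, w₁, w₂, w₃, hw₂, rfl⟩ := ih (by simp_all [support])
      exact ⟨v, cons d h w₁, w₂, w₃, hw₂, rfl⟩

theorem exists_isOpen_nodup {prev : Option (Bool × V)} (w : G.Walk x y) (hw : w.IsOpen S prev) :
    ∃ w' : G.Walk x y, w'.IsOpen S prev ∧ w'.support.Nodup := by
  induction hn : w.length using Nat.strong_induction_on generalizing w with
  | _ n ih =>
    by_cases hnd : w.support.Nodup
    · exact ⟨w, hw, hnd⟩
    obtain ⟨v, w₁, w₂, w₃, hw₂, rfl⟩ := exists_eq_append_loop_of_not_nodup w hnd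
    exact ih _ (by simp only [length_append] at hn ⊢; omega) (w₁.append w₃)
      (IsOpen.cut w₁ w₂ w₃ hw₂ hw) rfl

def getVert : ∀ {x y : V}, G.Walk x y → ℕ → V
  | x, _, nil, _ => x
  | x, _, cons _ _ _, 0 => x
  | _, _, cons _ _ w, i + 1 => w.getVert i

def getDir : ∀ {x y : V}, G.Walk x y → ℕ → Bool
  | _, _, nil, _ => false
  | _, _, cons d _ _, 0 => d
  | _, _, cons _ _ w, i + 1 => w.getDir i

@[simp] theorem getVert_zero (w : G.Walk x y) : w.getVert 0 = x := by
  cases w <;> rfl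

theorem getVert_length (w : G.Walk x y) : w.getVert w.length = y := by
  induction w with
  | nil => rfl
  | cons _ _ w ih => exact ih

theorem arc_getVert (w : G.Walk x y) {i : ℕ} (hi : i < w.length) :
    G.Arc (w.getDir i) (w.getVert i) (w.getVert (i + 1)) := by
  induction w generalizing i with
  | nil => simp [length] at hi
  | cons d h w ih =>
    cases i with
    | zero => simpa [getVert, getDir] using h
    | succ i => exact ih (by simp [length] at hi; omega)

theorem getVert_mem_support (w : G.Walk x y) {i : ℕ} (hi : i ≤ w.length) :
    w.getVert i ∈ w.support := by
  induction w generalizing i with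
  | nil => simp [getVert, support]
  | cons _ _ w ih =>
    cases i with
    | zero => simp [support]
    | succ i => exact List.mem_cons_of_mem _ (ih (by simp [length] at hi; omega))

theorem getVert_injOn (w : G.Walk x y) (hw : w.support.Nodup) {i j : ℕ} (hi : i ≤ w.length)
    (hj : j ≤ w.length) (h : w.getVert i = w.getVert j) : i = j := by
  induction w generalizing i j with
  | nil => simp [length] at hi hj; omega
  | cons d h' w ih =>
    simp only [support, List.nodup_cons] at hw
    cases i <;> cases j <;> simp only [getVert, length] at h hi hj ⊢
    · exact absurd (h ▸ getVert_mem_support w (by omega)) hw.1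
    · exact absurd (h ▸ getVert_mem_support w (by omega)) hw.1
    · exact congrArg _ (ih hw.2 (by omega) (by omega) h)

theorem isOpen_none_iff (w : G.Walk x y) :
    w.IsOpen S none ↔ ∀ i < w.length - 1, G.OpenAt S (w.getDir i) (w.getVert i)
      (w.getVert (i + 1)) (w.getDir (i + 1)) (w.getVert (i + 2)) := by
  induction w with
  | nil => simp [IsOpen, length]
  | cons d h w ih =>
    simp only [IsOpen, Option.not_mem_none, IsEmpty.forall_iff, implies_true, true_and]
    rw [isOpen_iff, ih]
    cases w with
    | nil => simp [firstStep, length]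
    | cons d' h' w' =>
      simp only [length, Nat.add_sub_cancel, Nat.forall_lt_succ_left]
      simp [firstStep, getVert, getDir]

def ofSeq : ∀ (n : ℕ) (f : ℕ → V) (g : ℕ → Bool),
    (∀ i < n, G.Arc (g i) (f i) (f (i + 1))) → G.Walk (f 0) (f n)
  | 0, _, _, _ => nil
  | n + 1, f, g, h =>
    cons (g 0) (h 0 n.succ_pos) (ofSeq n (fun i => f (i + 1)) (fun i => g (i + 1))
      fun i hi => h (i + 1) (Nat.succ_lt_succ hi))

theorem length_ofSeq (n : ℕ) (f : ℕ → V) (g : ℕ → Bool) (h) :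
    (ofSeq (G := G) n f g h).length = n := by
  induction n generalizing f g with
  | zero => rfl
  | succ n ih => simp [ofSeq, length, ih]

theorem getVert_ofSeq (n : ℕ) (f : ℕ → V) (g : ℕ → Bool) (h) {i : ℕ} (hi : i ≤ n) :
    (ofSeq (G := G) n f g h).getVert i = f i := by
  induction n generalizing f g i with
  | zero =>
    obtain rfl : i = 0 := by omega
    rfl
  | succ n ih => cases i with
    | zero => rfl
    | succ i => exact ih _ _ _ (by omega)

theorem getDir_ofSeq (n : ℕ) (f : ℕ → V) (g : ℕ → Bool) (h) {i : ℕ} (hi : i < n) :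
    (ofSeq (G := G) n f g h).getDir i = g i := by
  induction n generalizing f g i with
  | zero => omega
  | succ n ih => cases i with
    | zero => rfl
    | succ i => exact ih _ _ _ (by omega)

def copy (w : G.Walk x y) (hx : x = a) (hy : y = b) : G.Walk a b := hx ▸ hy ▸ w

theorem isOpen_copy {prev : Option (Bool × V)} (w : G.Walk x y) (hx : x = a) (hy : y = b)
    (hw : w.IsOpen S prev) : (w.copy hx hy).IsOpen S prev := by
  subst hx hy
  exact hw

theorem exists_isOpen_of_reach (h : G.reach x y) (hyx : G.reach y x) :
    ∃ w : G.Walk x y, (∀ u, w.IsOpen S (some (true, u))) ∧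
      ∀ u, ∃ u', w.lastStep (some (true, u)) = some (true, u') := by
  induction h using Relation.ReflTransGen.head_induction_on with
  | refl => exact ⟨.nil, fun _ => trivial, fun u => ⟨u, rfl⟩⟩
  | @head x x' hxx' hx'y ih =>
    obtain ⟨w, hw, hlast⟩ := ih (hyx.trans (.single hxx'))
    refine ⟨.cons true hxx' w, fun u => ⟨fun q hq => ?_, hw x⟩, fun _ => hlast x⟩
    cases hq
    rw [OpenAt, if_neg (by simp)]
    exact .inr ⟨fun _ => ⟨.single hxx', hx'y.trans hyx⟩, by simp⟩

theorem exists_isOpen_of_reach_of_edge (hb : G.Edge b x) (h : G.reach x y)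
    (hyx : G.reach y x) :
    ∃ w : G.Walk y b, w.IsOpen S none ∧ (∀ r ∈ w.firstStep, r.1 = false) ∧
      ∃ u, ∀ prev, w.lastStep prev = some (false, u) := by
  induction h with
  | refl =>
    exact ⟨.cons false hb .nil, ⟨by simp, trivial⟩, by simp [firstStep], x, fun _ => rfl⟩
  | @tail z y hxz hzy ih =>
    obtain ⟨w, hw, hfirst, u, hlast⟩ := ih ((Relation.ReflTransGen.single hzy).trans hyx)
    refine ⟨.cons false hzy w, ⟨by simp, (isOpen_iff w).mpr ⟨fun q hq r hr => ?_, hw⟩⟩,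
      by simp [firstStep], u, fun _ => hlast _⟩
    cases hq
    rw [OpenAt, if_neg (by simp [hfirst r hr])]
    exact .inr ⟨by simp [hfirst r hr], fun _ => ⟨.single hzy, hyx.trans hxz⟩⟩

end Walk

open Walk

theorem _root_.GPath.not_sigmaBlocked_iff (p : GPath G X Y) :
    ¬ p.sigmaBlocked S ↔ ∀ j : Fin p.k, G.OpenAt S (p.dir j.castSucc) (p.node j.castSucc.castSucc)
      (p.node j.succ.castSucc) (p.dir j.succ) (p.node j.succ.succ) := by
  simp only [GPath.sigmaBlocked, not_exists, OpenAt, GPath.isCollider, GPath.inner]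
  refine forall_congr' fun j => ?_
  split_ifs <;> tauto

theorem exists_isOpen_of_not_sigmaBlocked (p : GPath G X Y) (hp : ¬ p.sigmaBlocked S) :
    ∃ w : G.Walk X Y, w.IsOpen S none := by
  set f : ℕ → V := fun i => p.node ⟨min i (p.k + 1), by omega⟩
  set g : ℕ → Bool := fun i => p.dir ⟨min i p.k, by omega⟩
  have hfg : ∀ i < p.k + 1, G.Arc (g i) (f i) (f (i + 1)) := fun i hi => by
    have := arc_iff.mpr (p.adj ⟨i, hi⟩)
    convert this using 2 <;> simp [Fin.ext_iff] <;> omega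
  have hw := (isOpen_none_iff (S := S) (ofSeq _ f g hfg)).mpr fun i hi => by
    rw [length_ofSeq] at hi
    rw [getVert_ofSeq _ _ _ _ (by omega), getVert_ofSeq _ _ _ _ (by omega),
      getVert_ofSeq _ _ _ _ (by omega), getDir_ofSeq _ _ _ _ (by omega),
      getDir_ofSeq _ _ _ _ (by omega)]
    have := (p.not_sigmaBlocked_iff.mp hp) ⟨i, by omega⟩
    convert this using 2 <;> simp [Fin.ext_iff] <;> omega
  have hlast : f (p.k + 1) = Y := by
    convert p.last using 2
    simp [Fin.ext_iff]
  exact ⟨_, isOpen_copy _ (by simpa [f] using p.first) hlast hw⟩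

theorem exists_not_sigmaBlocked_of_isOpen (hne : X ≠ Y) (w : G.Walk X Y) (hw : w.IsOpen S none)
    (hnd : w.support.Nodup) : ∃ p : GPath G X Y, ¬ p.sigmaBlocked S := by
  obtain ⟨k, hk⟩ : ∃ k, w.length = k + 1 := by
    cases w with
    | nil => exact absurd rfl hne
    | cons _ _ w => exact ⟨w.length, rfl⟩
  refine ⟨⟨k, fun i => w.getVert i, fun i => w.getDir i,
    fun i j h => Fin.ext (getVert_injOn w hnd (by omega) (by omega) h), getVert_zero w,
    by simpa [hk] using getVert_length w, fun i => arc_iff.mp (arc_getVert w (by omega))⟩, ?_⟩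
  refine GPath.not_sigmaBlocked_iff _ |>.mpr fun j => ?_
  simpa using (isOpen_none_iff w).mp hw j (by have := j.isLt; simp only at this; omega)

theorem sigmaSep_iff_forall_not_isOpen (hne : X ≠ Y) :
    G.sigmaSep X Y S ↔ ∀ w : G.Walk X Y, ¬ w.IsOpen S none := by
  refine ⟨fun hsep w hw => ?_, fun h p => by_contra fun hp => ?_⟩
  · obtain ⟨w', hw', hnd⟩ := w.exists_isOpen_nodup hw
    obtain ⟨p, hp⟩ := exists_not_sigmaBlocked_of_isOpen hne w' hw' hnd
    exact hp (hsep p)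
  · obtain ⟨w, hw⟩ := exists_isOpen_of_not_sigmaBlocked p hp
    exact h w hw

theorem Acyclic.dSep_iff_sigmaSep (hG : G.Acyclic) : G.dSep X Y S ↔ G.sigmaSep X Y S := by
  refine forall_congr' fun p => exists_congr fun j => ?_
  have hprev : p.node j.castSucc.castSucc ≠ p.inner j := p.inj.ne (by simp [Fin.ext_iff])
  have hnext : p.node j.succ.succ ≠ p.inner j := p.inj.ne (by simp [Fin.ext_iff])
  simp only [GPath.isCollider, hG.scc_eq, Set.mem_singleton_iff, hprev, hnext, not_false_eq_true,
    and_true]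
  cases p.dir j.castSucc <;> cases p.dir j.succ <;> simp

/-- How an open walk of `G` from `a` to `Y`, entered by `prev`, is mirrored by open walks of `Ga`
out of the SCC of `a`: from the start of the walk, after entering the SCC through a tail, and
after entering it through an arrowhead. -/
structure LiftsFromScc (G Ga : DiGraph V) (S : Set V) (a Y : V) (prev : Option (Bool × V)) :
    Prop where
  start : ∀ x ∈ G.scc a, (prev = none → x = a) → ∃ ρ : Ga.Walk x Y, ρ.IsOpen S none
  tail : prev.isSome → ∀ x ∈ G.scc a, x ∉ S →
    ∃ ρ : Ga.Walk x Y, ∀ u, ρ.IsOpen S (some (false, u))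
  head : prev.isSome → (a ∈ G.anc S ∨ ∃ u, prev = some (true, u)) →
    ∃ c ∈ G.scc a, ∃ ρ : Ga.Walk c Y, ∀ u, ρ.IsOpen S (some (true, u))

theorem LiftsFromScc.cons_of_mem_scc {prev : Option (Bool × V)} {d : Bool} (hb : b ∈ G.scc a)
    (hhead : ∀ q ∈ prev, G.OpenAt S q.1 q.2 a d b)
    (ih : LiftsFromScc G Ga S b Y (some (d, a))) :
    LiftsFromScc G Ga S a Y prev where
  start x hx _ := ih.start x (scc_eq_of_mem hb ▸ hx) (by simp)
  tail _ x hx hxS := ih.tail rfl x (scc_eq_of_mem hb ▸ hx) hxS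
  head _ hcond := by
    have hb' : b ∈ G.anc S ∨ ∃ u, some (d, a) = some (true, u) := by
      cases d
      · refine .inl (mem_anc_of_reach hb.2 ?_)
        exact hcond.elim id fun ⟨_, hu⟩ => mem_anc_of_openAt (hhead _ hu)
      · exact .inr ⟨a, rfl⟩
    obtain ⟨c, hc, hρ⟩ := ih.head rfl hb'
    exact ⟨c, scc_eq_of_mem hb ▸ hc, hρ⟩

end DiGraph

namespace IsAcyclification

open DiGraph Walk

variable {V : Type} {G Ga : DiGraph V} {S : Set V} {a b c u w x y X Y : V}

theorem edge_of_edge_mem_scc (hGa : IsAcyclification G Ga) (he : G.Edge u w)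
    (hw : w ∈ G.scc c) (hu : u ∉ G.scc c) : Ga.Edge u c := by
  have hne : u ≠ c := by
    rintro rfl
    exact hu (G.mem_scc_self u)
  exact (hGa.2.1 u c hne hu).mpr ⟨w, hw, he⟩

theorem exists_edge_mem_scc (hGa : IsAcyclification G Ga) (h : Ga.Edge a b) :
    ∃ w, G.Edge a w ∧ w ∈ G.scc b := by
  by_cases hab : a ∈ G.scc b
  · obtain ⟨w, haw, hwb⟩ := Relation.TransGen.head'_iff.mp <|
      (Relation.reflTransGen_iff_eq_or_transGen.mp hab.2).resolve_left (ne_of_edge h).symm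
    exact ⟨w, haw, hab.1.trans (.single haw), hwb⟩
  · obtain ⟨w, hw, haw⟩ := (hGa.2.1 a b (ne_of_edge h) hab).mp h
    exact ⟨w, haw, hw⟩

theorem edge_or_edge_of_mem_scc (hGa : IsAcyclification G Ga) (h : x ∈ G.scc y)
    (hne : x ≠ y) : Ga.Edge x y ∨ Ga.Edge y x :=
  Xor.or (hGa.2.2 x y hne h)

theorem reach_of_reach (hGa : IsAcyclification G Ga) (h : Ga.reach x y) : G.reach x y := by
  induction h with
  | refl => exact .refl
  | tail _ hyz ih =>
    obtain ⟨w, hw, hwz⟩ := hGa.exists_edge_mem_scc hyz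
    exact ih.trans ((Relation.ReflTransGen.single hw).trans hwz.2)

theorem anc_subset (hGa : IsAcyclification G Ga) : Ga.anc S ⊆ G.anc S :=
  fun _ ⟨s, hs, h⟩ => ⟨s, hs, hGa.reach_of_reach h⟩

/-- The witness is the node where a directed path to `S` leaves the SCC. -/
theorem exists_mem_scc_mem_anc (hGa : IsAcyclification G Ga) (h : x ∈ G.anc S) :
    ∃ c ∈ G.scc x, c ∈ Ga.anc S := by
  obtain ⟨s, hs, hxs⟩ := h
  induction hxs using Relation.ReflTransGen.head_induction_on with
  | refl => exact ⟨s, G.mem_scc_self s, mem_anc_of_mem hs⟩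
  | @head z z' hzz' _ ih =>
    obtain ⟨c, hc, hcS⟩ := ih
    by_cases hz' : z' ∈ G.scc z
    · exact ⟨c, scc_eq_of_mem hz' ▸ hc, hcS⟩
    · have hzc : z ∉ G.scc c := fun hz => hz' (scc_eq_of_mem hz ▸ mem_scc_comm.mp hc)
      exact ⟨z, G.mem_scc_self z,
        mem_anc_of_edge (hGa.edge_of_edge_mem_scc hzz' (mem_scc_comm.mp hc) hzc) hcS⟩

theorem exists_isOpen_of_arc (hGa : IsAcyclification G Ga) {d : Bool} (h : Ga.Arc d a b) :
    ∃ w : G.Walk a b, w.IsOpen S none ∧ (∀ r ∈ w.firstStep, r.1 = d) ∧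
      ∃ u, ∀ prev, w.lastStep prev = some (d, u) := by
  cases d
  · obtain ⟨x, hbx, hxa⟩ := hGa.exists_edge_mem_scc h
    exact exists_isOpen_of_reach_of_edge hbx hxa.2 hxa.1
  · obtain ⟨x, hax, hxb⟩ := hGa.exists_edge_mem_scc h
    obtain ⟨w, hw, hlast⟩ := exists_isOpen_of_reach (S := S) hxb.2 hxb.1
    obtain ⟨u, hu⟩ := hlast a
    exact ⟨.cons true hax w, ⟨by simp, hw a⟩, by simp [firstStep], u, fun _ => hu⟩

theorem dOpenAt (hGa : IsAcyclification G Ga) {d d' : Bool} (h : Ga.DOpenAt S d x d') :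
    G.DOpenAt S d x d' := by
  unfold DOpenAt at h ⊢
  split_ifs at h ⊢
  exacts [hGa.anc_subset h, h]

theorem exists_isOpen_of_isOpen (hGa : IsAcyclification G Ga) {prev : Option (Bool × V)}
    (w : Ga.Walk a b) (hw : w.IsOpen S prev) (hprev : ∀ q ∈ prev, q.2 ≠ a) :
    ∃ w' : G.Walk a b, ∀ prev' : Option (Bool × V), prev'.map Prod.fst = prev.map Prod.fst →
      w'.IsOpen S prev' := by
  induction w generalizing prev with
  | nil => exact ⟨.nil, fun _ _ => trivial⟩
  | @cons a y b d h w ih =>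
    obtain ⟨w', hw'⟩ := ih hw.2 (by rintro q ⟨⟩; exact h.ne)
    obtain ⟨cw, hcw, hfirst, u, hlast⟩ := hGa.exists_isOpen_of_arc (S := S) h
    refine ⟨cw.append w', fun prev' hmap =>
      (isOpen_append cw w').mpr ⟨?_, hw' _ (by simp [hlast])⟩⟩
    refine (isOpen_iff cw).mpr ⟨fun q hq r hr => ?_, hcw⟩
    obtain ⟨q₀, rfl, hq₀⟩ : ∃ q₀, prev = some q₀ ∧ q₀.1 = q.1 := by
      cases prev <;> simp_all
    rw [hfirst r hr, ← hq₀]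
    exact (hGa.dOpenAt (hGa.1.dOpenAt_of_openAt (hw.1 q₀ rfl) (hprev q₀ rfl) h.ne.symm)).openAt

theorem exists_isOpen_of_mem_scc (hGa : IsAcyclification G Ga) (hx : x ∈ G.scc a) (hxa : x ≠ a)
    (ρ : Ga.Walk a Y) (hρ : ∀ q, ρ.IsOpen S (some q)) :
    ∃ ρ' : Ga.Walk x Y,
      ρ'.IsOpen S none ∧ (x ∉ S → ∀ u, ρ'.IsOpen S (some (false, u))) := by
  obtain ⟨d, hd⟩ : ∃ d, Ga.Arc d x a := by
    rcases hGa.edge_or_edge_of_mem_scc hx hxa with h | h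
    exacts [⟨true, h⟩, ⟨false, h⟩]
  refine ⟨.cons d hd ρ, ⟨by simp, hρ _⟩, fun hxS u => ⟨?_, hρ _⟩⟩
  rintro _ ⟨⟩
  exact openAt_of_notMem hxS (.inl rfl)

theorem liftsFromScc_nil (hGa : IsAcyclification G Ga) {prev : Option (Bool × V)} :
    LiftsFromScc G Ga S Y Y prev where
  start x hx _ := by
    by_cases hxY : x = Y
    · exact hxY ▸ ⟨.nil, trivial⟩
    · obtain ⟨ρ, hρ, -⟩ := hGa.exists_isOpen_of_mem_scc hx hxY .nil (S := S) fun _ => trivial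
      exact ⟨ρ, hρ⟩
  tail _ x hx hxS := by
    by_cases hxY : x = Y
    · exact hxY ▸ ⟨.nil, fun _ => trivial⟩
    · obtain ⟨ρ, -, hρ⟩ := hGa.exists_isOpen_of_mem_scc hx hxY .nil (S := S) fun _ => trivial
      exact ⟨ρ, hρ hxS⟩
  head _ _ := ⟨Y, G.mem_scc_self Y, .nil, fun _ => trivial⟩

theorem liftsFromScc_cons_forward (hGa : IsAcyclification G Ga) {prev : Option (Bool × V)}
    (h : G.Edge a b) (hb : b ∉ G.scc a) (hhead : ∀ q ∈ prev, G.OpenAt S q.1 q.2 a true b)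
    (ih : LiftsFromScc G Ga S b Y (some (true, a))) : LiftsFromScc G Ga S a Y prev := by
  obtain ⟨c, hc, ρ, hρ⟩ := ih.head rfl (.inr ⟨a, rfl⟩)
  have hac : Ga.Edge a c := hGa.edge_of_edge_mem_scc h (mem_scc_comm.mp hc)
    fun ha => hb (scc_eq_of_mem ha ▸ mem_scc_comm.mp hc)
  have haS : prev.isSome → a ∉ S := fun hsome => by
    obtain ⟨q, hq⟩ := Option.isSome_iff_exists.mp hsome
    exact notMem_of_openAt (hhead q hq) (.inr rfl) (.inl ⟨rfl, hb⟩)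
  have hρa : ∀ q, a ∉ S → (Walk.cons true hac ρ).IsOpen S (some q) := fun q haS =>
    ⟨by rintro _ ⟨⟩; exact openAt_of_notMem haS (.inr rfl), hρ a⟩
  refine ⟨fun x hx hnone => ?_, fun hsome x hx hxS => ?_,
    fun hsome _ => ⟨a, G.mem_scc_self a, _, fun u => hρa _ (haS hsome)⟩⟩
  · by_cases hxa : x = a
    · exact hxa ▸ ⟨.cons true hac ρ, by simp, hρ a⟩
    have hsome : prev.isSome := by
      cases prev
      exacts [absurd (hnone rfl) hxa, rfl]
    obtain ⟨ρ', hρ', -⟩ := hGa.exists_isOpen_of_mem_scc hx hxa _ fun q => hρa q (haS hsome)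
    exact ⟨ρ', hρ'⟩
  · by_cases hxa : x = a
    · exact hxa ▸ ⟨_, fun u => hρa _ (haS hsome)⟩
    obtain ⟨ρ', -, hρ'⟩ := hGa.exists_isOpen_of_mem_scc hx hxa _ fun q => hρa q (haS hsome)
    exact ⟨ρ', hρ' hxS⟩

theorem liftsFromScc_cons_backward (hGa : IsAcyclification G Ga) {prev : Option (Bool × V)}
    (h : G.Edge b a) (hb : b ∉ G.scc a) (hhead : ∀ q ∈ prev, G.OpenAt S q.1 q.2 a false b)
    (hρ : ∃ ρ : Ga.Walk b Y, ∀ u, ρ.IsOpen S (some (false, u))) :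
    LiftsFromScc G Ga S a Y prev := by
  obtain ⟨ρ, hρ⟩ := hρ
  have hbx : ∀ x ∈ G.scc a, Ga.Edge b x := fun x hx =>
    hGa.edge_of_edge_mem_scc h (mem_scc_comm.mp hx) fun hbx => hb (by rwa [scc_eq_of_mem hx])
  refine ⟨fun x hx _ => ⟨.cons false (hbx x hx) ρ, by simp, hρ x⟩, fun _ x hx hxS =>
    ⟨.cons false (hbx x hx) ρ, fun _ =>
      ⟨by rintro _ ⟨⟩; exact openAt_of_notMem hxS (.inl rfl), hρ x⟩⟩, fun _ hcond => ?_⟩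
  have ha : a ∈ G.anc S := hcond.elim id fun ⟨_, hu⟩ => mem_anc_of_openAt (hhead _ hu)
  obtain ⟨c, hc, hcS⟩ := hGa.exists_mem_scc_mem_anc ha
  exact ⟨c, hc, .cons false (hbx c hc) ρ, fun _ =>
    ⟨by rintro _ ⟨⟩; exact openAt_of_collider hcS, hρ c⟩⟩

theorem liftsFromScc (hGa : IsAcyclification G Ga) {prev : Option (Bool × V)} (w : G.Walk a Y)
    (hw : w.IsOpen S prev) : LiftsFromScc G Ga S a Y prev := by
  induction w generalizing prev with
  | nil => exact hGa.liftsFromScc_nil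
  | @cons a b Y d h w ih =>
    by_cases hb : b ∈ G.scc a
    · exact .cons_of_mem_scc hb hw.1 (ih hw.2)
    cases d
    · refine hGa.liftsFromScc_cons_backward h hb hw.1 ?_
      cases w with
      | nil => exact ⟨.nil, fun _ => trivial⟩
      | cons d' h' w =>
        have hbS : b ∉ S := notMem_of_openAt (hw.2.1 _ rfl) (.inl rfl)
          (.inr ⟨rfl, fun ha => hb (mem_scc_comm.mp ha)⟩)
        exact (ih hw.2).tail rfl b (G.mem_scc_self b) hbS
    · exact hGa.liftsFromScc_cons_forward h hb hw.1 (ih hw.2)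

theorem sigmaSep_iff_dSep (hGa : IsAcyclification G Ga) (hne : X ≠ Y) :
    G.sigmaSep X Y S ↔ Ga.dSep X Y S := by
  rw [hGa.1.dSep_iff_sigmaSep, sigmaSep_iff_forall_not_isOpen hne,
    sigmaSep_iff_forall_not_isOpen hne]
  refine ⟨fun h ρ hρ => ?_, fun h w hw => ?_⟩
  · obtain ⟨w, hw⟩ := hGa.exists_isOpen_of_isOpen ρ hρ (by simp)
    exact h w (hw none rfl)
  · obtain ⟨ρ, hρ⟩ := (hGa.liftsFromScc w hw).start X (G.mem_scc_self X) fun _ => rfl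
    exact h ρ hρ

end IsAcyclification

theorem mb_determined_by_observed_separations_general {V : Type}
    (G Ga : DiGraph V) (Obs : Set V)
    (hGa : IsAcyclification G Ga) (X : V) :
    (∀ S ⊆ Obs \ {X},
      ((∀ W ∈ Obs \ (S ∪ {X}), G.sigmaSep X W S) ↔
        (∀ W ∈ Obs \ (S ∪ {X}), Ga.dSep X W S))) ∧
    (∀ S : Set V, Ga.IsDMB Obs X S ↔ G.IsSigmaMB Obs X S) := by
  have hsep : ∀ S : Set V, (∀ W ∈ Obs \ (S ∪ {X}), G.sigmaSep X W S) ↔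
      ∀ W ∈ Obs \ (S ∪ {X}), Ga.dSep X W S :=
    fun S => forall₂_congr fun W hW => hGa.sigmaSep_iff_dSep fun h => hW.2 (.inr h.symm)
  refine ⟨fun S _ => hsep S, fun S => ?_⟩
  simp only [DiGraph.IsDMB, DiGraph.IsSigmaMB, hsep]

/-- The observed Markov blanket is determined by the observed
separation relations: the collection of separating sets for `X` w.r.t.
σ-separation in `G` coincides with that w.r.t. d-separation in any
σ-acyclification; consequently the minimal such set is `MB_σ^G(X)`. -/
theorem mb_determined_by_observed_separations {V : Type} [Fintype V]
    (G Ga : DiGraph V) (Obs Lat : Set V)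
    (hpart : Obs ∪ Lat = Set.univ) (hdisj : Obs ∩ Lat = ∅)
    (hGa : IsAcyclification G Ga) (X : V) (hX : X ∈ Obs) :
    (∀ S ⊆ Obs \ {X},
      ((∀ W ∈ Obs \ (S ∪ {X}), G.sigmaSep X W S) ↔
        (∀ W ∈ Obs \ (S ∪ {X}), Ga.dSep X W S))) ∧
    (∀ S : Set V, Ga.IsDMB Obs X S ↔ G.IsSigmaMB Obs X S) :=
  mb_determined_by_observed_separations_general G Ga Obs hGa X
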